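/- Let X, G ∈ ℝ^M, 𝒜 = G X^T − X G^T, τ ≥ 0, and suppose the denominator D(τ) = 1 − τ²(X^T G)² + τ² ‖X‖₂² ‖G‖₂² is nonzero. Then Y(τ) = (I + τ𝒜)^{-1}(I − τ𝒜) X satisfies Y(τ) = α(τ) X + β(τ) G, where α(τ) = ((1 + τ X^T G)² − τ² ‖X‖₂² ‖G‖₂²)/D(τ) and β(τ) = −2τ ‖X‖₂² / D(τ). -/
import Mathlib


open Matrix

lemma vmv_mul {M : ℕ} (a b c d : Fin M → ℝ) :
    Matrix.vecMulVec a b * Matrix.vecMulVec c d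
      = (∑ i, b i * c i) • Matrix.vecMulVec a d := by
  ext i j
  simp only [Matrix.mul_apply, Matrix.vecMulVec_apply, Matrix.smul_apply, smul_eq_mul]
  rw [Finset.sum_mul]
  exact Finset.sum_congr rfl fun k _ => by ring

lemma vmv_mulVec {M : ℕ} (a b u : Fin M → ℝ) :
    (Matrix.vecMulVec a b).mulVec u = (∑ i, b i * u i) • a := by
  ext i
  simp only [Matrix.mulVec, Matrix.vecMulVec_apply, dotProduct, Pi.smul_apply,
    smul_eq_mul]
  rw [Finset.sum_mul]
  exact Finset.sum_congr rfl fun k _ => by ring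


/-- Closed form of the curvilinear search point: with real X, G,
𝒜 = G Xᵀ − X Gᵀ, and nonzero denominator D(τ), one has
Y(τ) = α(τ) X + β(τ) G. -/
theorem stmt3 (M : ℕ) (X G : Fin M → ℝ) (τ : ℝ) (hτ : 0 ≤ τ)
    (A : Matrix (Fin M) (Fin M) ℝ)
    (hAdef : A = Matrix.vecMulVec G X - Matrix.vecMulVec X G)
    (D : ℝ)
    (hD : D = 1 - τ ^ 2 * (∑ i, X i * G i) ^ 2
        + τ ^ 2 * (∑ i, X i ^ 2) * (∑ i, G i ^ 2))
    (hDne : D ≠ 0) :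
    ((1 + τ • A)⁻¹ * (1 - τ • A)).mulVec X =
      (((1 + τ * (∑ i, X i * G i)) ^ 2
          - τ ^ 2 * (∑ i, X i ^ 2) * (∑ i, G i ^ 2)) / D) • X
        + ((-2 * τ * (∑ i, X i ^ 2)) / D) • G := by
  set s : ℝ := ∑ i, X i * G i with hs
  set p : ℝ := ∑ i, X i ^ 2 with hp
  set q : ℝ := ∑ i, G i ^ 2 with hq
  have hpx : (∑ i, X i * X i) = p := by rw [hp]; exact Finset.sum_congr rfl fun i _ => (sq (X i)).symm
  have hqg : (∑ i, G i * G i) = q := by rw [hq]; exact Finset.sum_congr rfl fun i _ => (sq (G i)).symm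
  have hsg : (∑ i, G i * X i) = s := by rw [hs]; exact Finset.sum_congr rfl fun i _ => mul_comm _ _
  have hAX : A.mulVec X = p • G - s • X := by
    rw [hAdef, Matrix.sub_mulVec, vmv_mulVec, vmv_mulVec, hpx, hsg]
  have hAG : A.mulVec G = s • G - q • X := by
    rw [hAdef, Matrix.sub_mulVec, vmv_mulVec, vmv_mulVec, ← hs, hqg]
  have hA2 : A * A = s • (Matrix.vecMulVec G X) - p • (Matrix.vecMulVec G G)
      - q • (Matrix.vecMulVec X X) + s • (Matrix.vecMulVec X G) := by
    rw [hAdef]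
    simp only [sub_mul, mul_sub, vmv_mul, hpx, hqg, hsg, ← hs]
    abel
  have hA3 : A * (A * A) = (s ^ 2 - p * q) • A := by
    rw [hA2, hAdef]
    simp only [sub_mul, mul_sub, mul_add, add_mul, smul_sub, smul_add, mul_smul_comm,
      smul_mul_assoc, vmv_mul, hpx, hqg, hsg, ← hs, smul_smul, smul_sub]
    match_scalars <;> ring
  set C : Matrix (Fin M) (Fin M) ℝ :=
    1 + (τ ^ 2 / D) • (A * A) - (τ / D) • A with hC
  have hBC : (1 + τ • A) * C = 1 := by
    rw [hC]
    have expand : (1 + τ • A) * (1 + (τ ^ 2 / D) • (A * A) - (τ / D) • A)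
        = 1 + (τ ^ 2 / D) • (A * A) - (τ / D) • A + τ • A
          + (τ * (τ ^ 2 / D)) • (A * (A * A)) - (τ * (τ / D)) • (A * A) := by
      simp only [mul_sub, mul_add, add_mul, sub_mul, one_mul, mul_one, smul_mul_assoc,
        mul_smul_comm, smul_smul, mul_assoc, smul_add, smul_sub]
      match_scalars <;> ring
    rw [expand, hA3, smul_smul]
    match_scalars <;> (try field_simp [hDne]) <;> (try rw [hD]) <;> ring
  have hinv : (1 + τ • A)⁻¹ = C := Matrix.inv_eq_right_inv hBC
  rw [hinv, hC]
  simp only [Matrix.sub_mulVec, Matrix.add_mulVec, Matrix.one_mulVec,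
    Matrix.smul_mulVec, ← Matrix.mulVec_mulVec, Matrix.mulVec_sub, Matrix.mulVec_add,
    Matrix.mulVec_smul, hAX, hAG, smul_sub, smul_add, smul_smul]
  match_scalars <;> (try field_simp [hDne]) <;> (try rw [hD]) <;> ring
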